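/- arXiv:1805.01924 — 5 statements merged into one kernel-verified Lean document; each statement's English description precedes it below -/
import Mathlib

section
/- Let n and k be positive integers with k ≤ n, and let f be a b-coloring of the Kneser graph KG(n, m) (with m ≤ n). For each color c used by f, let S°(c) denote the intersection of all m-subsets in the color class f⁻¹(c). Then for any two distinct colors c and d used by f, the sets S°(c) and S°(d) are disjoint. -/
/-- The Kneser graph `KG(n, m)`: vertices are the `m`-element subsets of an
`n`-element set, adjacent iff disjoint. -/
def kneserGraph (n m : ℕ) : SimpleGraph {A : Finset (Fin n) // A.card = m} where
  Adj A B := A ≠ B ∧ Disjoint (A : Finset (Fin n)) (B : Finset (Fin n))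
  symm := ⟨fun _ _ h => ⟨h.1.symm, h.2.symm⟩⟩
  loopless := ⟨fun _ h => h.1 rfl⟩

/-- `f` is a proper coloring of `G`. -/
def IsProperColoring {V α : Type*} (G : SimpleGraph V) (f : V → α) : Prop :=
  ∀ v w : V, G.Adj v w → f v ≠ f w

/-- `v` is color-dominating w.r.t. the coloring `f`: every used color appears
in the closed neighborhood of `v`. -/
def IsColorDominating {V α : Type*} (G : SimpleGraph V) (f : V → α) (v : V) : Prop :=
  ∀ c ∈ Set.range f, f v = c ∨ ∃ w : V, G.Adj v w ∧ f w = c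

/-- `f` is a b-coloring of `G`: a proper coloring each of whose color classes
contains a color-dominating vertex. -/
def IsBColoring {V α : Type*} (G : SimpleGraph V) (f : V → α) : Prop :=
  IsProperColoring G f ∧
    ∀ c ∈ Set.range f, ∃ v : V, f v = c ∧ IsColorDominating G f v

/-- The b-chromatic number of `G`: the largest `k` such that `G` admits a
b-coloring with exactly `k` colors. -/
noncomputable def bChromaticNumber {V : Type*} (G : SimpleGraph V) : ℕ :=
  sSup {k : ℕ | ∃ f : V → Fin k, Function.Surjective f ∧ IsBColoring G f}

/-- For a b-coloring `f` of the Kneser graph `KG(n, m)` and two distinct used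
colors `c` and `d`, the common intersections `S°(c)` and `S°(d)` of the
corresponding color classes are disjoint. -/
theorem cores_of_distinct_color_classes_disjoint {n m : ℕ} (hm : 1 ≤ m) (hmn : m ≤ n)
    {α : Type*} (f : {A : Finset (Fin n) // A.card = m} → α)
    (hf : IsBColoring (kneserGraph n m) f)
    (c d : α) (hc : c ∈ Set.range f) (hd : d ∈ Set.range f) (hcd : c ≠ d) :
    Disjoint (⋂ A ∈ {A | f A = c}, ((A : Finset (Fin n)) : Set (Fin n)))
      (⋂ A ∈ {A | f A = d}, ((A : Finset (Fin n)) : Set (Fin n))) := by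
  rw [Set.disjoint_left]
  intro x hx hx'
  obtain ⟨v, hvc, hvdom⟩ := hf.2 c hc
  rcases hvdom d hd with h | ⟨w, hadj, hwd⟩
  · exact hcd (hvc ▸ h)
  · have hxv : x ∈ (v : Finset (Fin n)) := by
      have := Set.mem_iInter₂.mp hx v hvc
      simpa using this
    have hxw : x ∈ (w : Finset (Fin n)) := by
      have := Set.mem_iInter₂.mp hx' w hwd
      simpa using this
    exact hadj.2.forall_ne_finset hxv hxw rfl
end

section
/- Let n and m be positive integers with m ≤ n, and let f be a b-coloring of the Kneser graph KG(n, m). For each color c, let S°(c) denote the intersection of all m-subsets in the color class f⁻¹(c). Then the number of colors c used by f for which S°(c) is nonempty is at most n (the size of the ground set). -/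
/-- For a b-coloring `f` of the Kneser graph `KG(n, m)`, the number of used
colors `c` whose color class has nonempty common intersection `S°(c)` is at
most `n`, the size of the ground set. -/
theorem card_intersecting_color_classes_le {n m : ℕ} (hm : 1 ≤ m) (hmn : m ≤ n)
    {α : Type*} (f : {A : Finset (Fin n) // A.card = m} → α)
    (hf : IsBColoring (kneserGraph n m) f) :
    {c ∈ Set.range f |
      (⋂ A ∈ {A | f A = c}, ((A : Finset (Fin n)) : Set (Fin n))).Nonempty}.ncard ≤ n := by
  obtain ⟨hprop, hdom⟩ := hf
  set S := {c ∈ Set.range f |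
      (⋂ A ∈ {A | f A = c}, ((A : Finset (Fin n)) : Set (Fin n))).Nonempty} with hS
  have hw : ∀ c ∈ S, ∃ x : Fin n, ∀ A, f A = c → x ∈ (A : Finset (Fin n)) := by
    intro c hc
    obtain ⟨x, hx⟩ := hc.2
    exact ⟨x, fun A hA => Set.mem_iInter₂.mp hx A hA⟩
  have hne0 : Nonempty (Fin n) := ⟨⟨0, by omega⟩⟩
  choose! g hg using hw
  have hinj : Set.InjOn g S := by
    intro c hc c' hc' he
    by_contra hne
    obtain ⟨v, hv, hvdom⟩ := hdom c hc.1
    rcases hvdom c' hc'.1 with h | ⟨w, hadj, hw'⟩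
    · exact hne (hv ▸ h)
    · have hx1 : g c ∈ (v : Finset (Fin n)) := hg c hc v hv
      have hx2 : g c' ∈ (w : Finset (Fin n)) := hg c' hc' w hw'
      rw [he] at hx1
      exact (Finset.disjoint_left.mp (show v ≠ w ∧ Disjoint (v : Finset (Fin n)) (w : Finset (Fin n)) from hadj).2 hx1) hx2
  calc S.ncard = (g '' S).ncard := (Set.ncard_image_of_injOn hinj).symm
    _ ≤ (Set.univ : Set (Fin n)).ncard := Set.ncard_le_ncard (Set.subset_univ _) Set.finite_univ
    _ = n := by rw [Set.ncard_univ]; simp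
end

section
/- Let n ≥ 1 and k ≥ 0 be integers, and let f be a b-coloring of the Kneser graph G_k = KG(2n+k, n) using a set of colors 𝒞. Let ℐ denote the set of colors c ∈ 𝒞 for which the intersection of all vertices in the color class f⁻¹(c) is nonempty. Then |𝒞| − |ℐ| ≤ (|V(G_k)| − |ℐ|)/3, where |V(G_k)| = C(2n+k, n) is the number of vertices of G_k. -/
open scoped Classical in
lemma class_card_ge {n k : ℕ} (hn : 1 ≤ n) {α : Type*}
    (f : {A : Finset (Fin (2 * n + k)) // A.card = n} → α)
    (hf : IsProperColoring (kneserGraph (2 * n + k) n) f)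
    {c : α} (hc : c ∈ Set.range f)
    (hni : ¬ (⋂ A ∈ {A | f A = c},
        ((A : Finset (Fin (2 * n + k))) : Set (Fin (2 * n + k)))).Nonempty) :
    3 ≤ (Finset.univ.filter fun A => f A = c).card := by
  classical
  by_contra h
  push_neg at h
  apply hni
  obtain ⟨A, hA⟩ := hc
  by_cases hall : ∀ B, f B = c → B = A
  · obtain ⟨x, hx⟩ := Finset.card_pos.mp (show 0 < (A : Finset (Fin (2*n+k))).card by rw [A.2]; omega)
    exact ⟨x, Set.mem_biInter fun B hB => by rw [hall B hB]; exact hx⟩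
  · push_neg at hall
    obtain ⟨B, hB, hBA⟩ := hall
    have hadj : ¬ (kneserGraph (2*n+k) n).Adj B A := fun had => hf B A had (by rw [hA, hB])
    have hdis : ¬ Disjoint (A : Finset (Fin (2*n+k))) (B : Finset (Fin (2*n+k))) :=
      fun hd => hadj ⟨hBA, hd.symm⟩
    obtain ⟨x, hxA, hxB⟩ := Finset.not_disjoint_iff.mp hdis
    refine ⟨x, Set.mem_biInter fun D hD => ?_⟩
    have hsub : ({A, B} : Finset _) ⊆ Finset.univ.filter fun E => f E = c := by
      intro E hE
      simp only [Finset.mem_insert, Finset.mem_singleton] at hE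
      rcases hE with rfl | rfl <;> simp [hA, hB]
    have hcard2 : ({A, B} : Finset _).card = 2 := Finset.card_pair (fun e => hBA e.symm)
    have heq : ({A, B} : Finset _) = Finset.univ.filter fun E => f E = c :=
      Finset.eq_of_subset_of_card_le hsub (by omega)
    have hD' : D ∈ ({A, B} : Finset _) := by
      rw [heq]; simp only [Finset.mem_filter, Finset.mem_univ, true_and]; exact hD
    simp only [Finset.mem_insert, Finset.mem_singleton] at hD'
    rcases hD' with rfl | rfl
    · exact hxA
    · exact hxB


/-- For a b-coloring `f` of the Kneser graph `G_k = KG(2n+k, n)` with color set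
`𝒞` (the colors used by `f`), if `ℐ` is the set of used colors whose color
class has nonempty common intersection, then
`|𝒞| - |ℐ| ≤ (|V(G_k)| - |ℐ|) / 3`, where `|V(G_k)| = C(2n+k, n)`. -/
theorem card_nonintersecting_classes_le {n k : ℕ} (hn : 1 ≤ n)
    {α : Type*} (f : {A : Finset (Fin (2 * n + k)) // A.card = n} → α)
    (hf : IsBColoring (kneserGraph (2 * n + k) n) f) :
    ((Set.range f).ncard : ℝ) -
        ({c ∈ Set.range f |
          (⋂ A ∈ {A | f A = c},
            ((A : Finset (Fin (2 * n + k))) : Set (Fin (2 * n + k)))).Nonempty}.ncard : ℝ) ≤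
      (((2 * n + k).choose n : ℝ) -
        ({c ∈ Set.range f |
          (⋂ A ∈ {A | f A = c},
            ((A : Finset (Fin (2 * n + k))) : Set (Fin (2 * n + k)))).Nonempty}.ncard : ℝ)) / 3 := by
  classical
  set I : Set α := {c ∈ Set.range f |
      (⋂ A ∈ {A | f A = c},
        ((A : Finset (Fin (2 * n + k))) : Set (Fin (2 * n + k)))).Nonempty} with hI
  have hCfin : (Set.range f).Finite := Set.finite_range f
  have hIfin : I.Finite := hCfin.subset (fun c hc => hc.1)
  set CF := hCfin.toFinset with hCF
  set IF := hIfin.toFinset with hIF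
  have hIsub : IF ⊆ CF := by
    intro c hc
    simp only [hIF, Set.Finite.mem_toFinset] at hc
    simp only [hCF, Set.Finite.mem_toFinset]
    exact hc.1
  -- total count
  have htotal : Fintype.card {A : Finset (Fin (2 * n + k)) // A.card = n}
      = ∑ c ∈ CF, (Finset.univ.filter fun A => f A = c).card := by
    rw [← Finset.card_univ]
    exact Finset.card_eq_sum_card_fiberwise (fun A _ => by
      exact hCfin.mem_toFinset.mpr ⟨A, rfl⟩)
  have hVcard : Fintype.card {A : Finset (Fin (2 * n + k)) // A.card = n} = (2*n+k).choose n := by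
    simpa using Fintype.card_finset_len (α := Fin (2*n+k)) n
  -- lower bounds
  have hbound1 : ∀ c ∈ IF, 1 ≤ (Finset.univ.filter fun A => f A = c).card := by
    intro c hc
    simp only [hIF, Set.Finite.mem_toFinset, hI] at hc
    obtain ⟨⟨A, hA⟩, -⟩ := hc
    exact Finset.card_pos.mpr ⟨A, by simp [hA]⟩
  have hbound3 : ∀ c ∈ CF \ IF, 3 ≤ (Finset.univ.filter fun A => f A = c).card := by
    intro c hc
    rw [Finset.mem_sdiff] at hc
    obtain ⟨hcC, hcI⟩ := hc
    simp only [hCF, Set.Finite.mem_toFinset] at hcC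
    simp only [hIF, Set.Finite.mem_toFinset, hI, Set.mem_setOf_eq] at hcI
    exact class_card_ge hn f hf.1 hcC (fun hne => hcI ⟨hcC, hne⟩)
  have hun : IF ∪ (CF \ IF) = CF := Finset.union_sdiff_of_subset hIsub
  have hsplit : ∑ c ∈ CF, (Finset.univ.filter fun A => f A = c).card
      = ∑ c ∈ IF, (Finset.univ.filter fun A => f A = c).card
        + ∑ c ∈ CF \ IF, (Finset.univ.filter fun A => f A = c).card := by
    rw [← Finset.sum_union Finset.disjoint_sdiff, hun]
  have hsum : IF.card * 1 + (CF \ IF).card * 3 ≤ ∑ c ∈ CF, (Finset.univ.filter fun A => f A = c).card := by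
    rw [hsplit]
    gcongr ?_ + ?_
    · calc IF.card * 1 = ∑ _c ∈ IF, 1 := by simp
        _ ≤ _ := Finset.sum_le_sum hbound1
    · calc (CF \ IF).card * 3 = ∑ _c ∈ CF \ IF, 3 := by simp [Finset.sum_const, mul_comm]
        _ ≤ _ := Finset.sum_le_sum hbound3
  have hcardsplit : IF.card + (CF \ IF).card = CF.card := by
    have := Finset.card_sdiff_add_card_eq_card hIsub; omega
  have hkey : IF.card + (CF \ IF).card * 3 ≤ (2 * n + k).choose n := by
    calc IF.card + (CF \ IF).card * 3 = IF.card * 1 + (CF \ IF).card * 3 := by ring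
      _ ≤ ∑ c ∈ CF, (Finset.univ.filter fun A => f A = c).card := hsum
      _ = (2 * n + k).choose n := by rw [← htotal, hVcard]
  have hC : (Set.range f).ncard = CF.card := Set.ncard_eq_toFinset_card _ hCfin
  have hIc : I.ncard = IF.card := Set.ncard_eq_toFinset_card _ hIfin
  rw [hC, hIc]
  have h1 : (IF.card : ℝ) + (CF \ IF).card * 3 ≤ ((2 * n + k).choose n : ℝ) := by
    exact_mod_cast hkey
  have h2 : (IF.card : ℝ) + (CF \ IF).card = CF.card := by exact_mod_cast hcardsplit
  linarith
end

section
/- Let n ≥ 1 and k ≥ 0 be integers. Then the b-chromatic number of the Kneser graph G_k = KG(2n+k, n) satisfies φ(G_k) ≤ (C(2n+k, n) + 2(2n+k))/3, where C(2n+k, n) = |V(G_k)| is the number of vertices of G_k. -/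
/-!
Let `f` be a b-coloring of `KG(N, m)` with `m ≥ 1`, and call the intersection of all sets of
one color the core of that color. A color-dominating vertex of color `c` is disjoint from some
vertex of any other color `c'`, and these two vertices contain the cores of `c` and `c'`, so the
cores of distinct colors are disjoint. A color class with at most two members has a nonempty
core, because two distinct sets of the same color are not adjacent, i.e. they meet. Hence there
are at most `N` such small classes, and all the other classes have at least three members:
`3 · #colors ≤ C(N, m) + 2N`.
-/

open Finset

section ColorClass

variable {V ι : Type*} [Fintype V] [DecidableEq ι]

def colorClass (f : V → ι) (c : ι) : Finset V := {v | f v = c}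

@[simp]
theorem mem_colorClass {f : V → ι} {c : ι} {v : V} : v ∈ colorClass f c ↔ f v = c := by
  simp [colorClass]

theorem three_mul_card_le_card_add_two_mul_card_colorClass_le_two [Fintype ι] {f : V → ι}
    (hf : Function.Surjective f) :
    3 * Fintype.card ι ≤ Fintype.card V + 2 * #{c | #(colorClass f c) ≤ 2} := by
  calc 3 * Fintype.card ι = ∑ _c : ι, 3 := by simp [mul_comm]
    _ ≤ ∑ c : ι, (#(colorClass f c) + if #(colorClass f c) ≤ 2 then 2 else 0) := by
        refine sum_le_sum fun c _ => ?_
        obtain ⟨v, hv⟩ := hf c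
        have : 0 < #(colorClass f c) := card_pos.2 ⟨v, mem_colorClass.2 hv⟩
        split_ifs <;> omega
    _ = Fintype.card V + 2 * #{c | #(colorClass f c) ≤ 2} := by
        rw [sum_add_distrib, sum_ite, sum_const, sum_const_zero, smul_eq_mul, add_zero,
          mul_comm, ← card_univ, card_eq_sum_card_fiberwise (fun v _ => mem_univ (f v))]
        rfl

end ColorClass

section ColorCore

variable {N m : ℕ} {ι : Type*} [DecidableEq ι] {f : {A : Finset (Fin N) // A.card = m} → ι}

/-- The intersection of the sets of color `c`; it is `univ` when `c` is not used by `f`. -/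
def colorCore (f : {A : Finset (Fin N) // A.card = m} → ι) (c : ι) : Finset (Fin N) :=
  (colorClass f c).inf Subtype.val

theorem colorCore_subset {c : ι} {A : {A : Finset (Fin N) // A.card = m}} (hA : f A = c) :
    colorCore f c ⊆ A :=
  inf_le (mem_colorClass.2 hA)

theorem disjoint_colorCore (hf : IsBColoring (kneserGraph N m) f) {c c' : ι}
    (hc : c ∈ Set.range f) (hc' : c' ∈ Set.range f) (hne : c ≠ c') :
    Disjoint (colorCore f c) (colorCore f c') := by
  obtain ⟨v, rfl, hv⟩ := hf.2 c hc
  rcases hv c' hc' with h | ⟨w, hvw, rfl⟩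
  · exact absurd h hne
  · exact hvw.2.mono (colorCore_subset rfl) (colorCore_subset rfl)

theorem colorCore_nonempty_of_card_le_two (hm : 1 ≤ m) (hf : IsProperColoring (kneserGraph N m) f)
    {c : ι} (hc : c ∈ Set.range f) (hsmall : #(colorClass f c) ≤ 2) :
    (colorCore f c).Nonempty := by
  obtain ⟨A, hA⟩ := hc
  have hpos : 0 < #(colorClass f c) := card_pos.2 ⟨A, mem_colorClass.2 hA⟩
  obtain hone | htwo : #(colorClass f c) = 1 ∨ #(colorClass f c) = 2 := by omega
  · obtain ⟨B, hB⟩ := card_eq_one.1 hone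
    rw [colorCore, hB, inf_singleton]
    exact card_pos.1 (by rw [B.2]; exact hm)
  · obtain ⟨B, B', hBB', hB⟩ := card_eq_two.1 htwo
    have hBc : f B = c := mem_colorClass.1 (hB ▸ mem_insert_self B {B'})
    have hB'c : f B' = c := mem_colorClass.1 (hB ▸ mem_insert_of_mem (mem_singleton_self B'))
    have hmeet : ¬Disjoint (B : Finset (Fin N)) B' := fun hd =>
      hf B B' ⟨hBB', hd⟩ (hBc.trans hB'c.symm)
    rw [colorCore, hB, inf_insert, inf_singleton]
    exact not_disjoint_iff_nonempty_inter.1 hmeet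

theorem card_colorClass_le_two_le [Fintype ι] (hm : 1 ≤ m) (hsurj : Function.Surjective f)
    (hf : IsBColoring (kneserGraph N m) f) : #{c | #(colorClass f c) ≤ 2} ≤ N :=
  calc #{c | #(colorClass f c) ≤ 2}
      ≤ #(({c | #(colorClass f c) ≤ 2} : Finset ι).biUnion (colorCore f)) :=
        card_le_card_biUnion
          (fun c _ c' _ hne => disjoint_colorCore hf (hsurj c) (hsurj c') hne)
          (fun c hc => colorCore_nonempty_of_card_le_two hm hf.1 (hsurj c) (mem_filter.1 hc).2)
    _ ≤ N := (card_le_univ _).trans_eq (Fintype.card_fin N)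

theorem three_mul_card_le_choose_add_of_isBColoring [Fintype ι] (hm : 1 ≤ m)
    (hsurj : Function.Surjective f) (hf : IsBColoring (kneserGraph N m) f) :
    3 * Fintype.card ι ≤ N.choose m + 2 * N := by
  have hcount := three_mul_card_le_card_add_two_mul_card_colorClass_le_two hsurj
  rw [Fintype.card_finset_len, Fintype.card_fin] at hcount
  have := card_colorClass_le_two_le hm hsurj hf
  omega

end ColorCore

/-- The b-chromatic number of the Kneser graph `G_k = KG(2n+k, n)` is at most
`(C(2n+k, n) + 2(2n+k)) / 3`. -/
theorem bChromaticNumber_kneser_le {n k : ℕ} (hn : 1 ≤ n) :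
    (bChromaticNumber (kneserGraph (2 * n + k) n) : ℝ) ≤
      (((2 * n + k).choose n : ℝ) + 2 * (2 * n + k)) / 3 := by
  have hbound : bChromaticNumber (kneserGraph (2 * n + k) n) ≤
      ((2 * n + k).choose n + 2 * (2 * n + k)) / 3 := by
    refine csSup_le' fun j ⟨f, hsurj, hf⟩ => (Nat.le_div_iff_mul_le three_pos).2 ?_
    simpa [mul_comm] using three_mul_card_le_choose_add_of_isBColoring hn hsurj hf
  rw [le_div_iff₀ three_pos]
  exact_mod_cast (Nat.le_div_iff_mul_le three_pos).1 hbound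
end

section
/- Fix an integer n ≥ 2, and for k ≥ 0 let G_k = KG(2n+k, n). Then φ(G_k) ≤ (1 + o(1)) · |V(G_k)|/3 as k → ∞; that is, for every ε > 0 there exists K such that for all k ≥ K, the b-chromatic number satisfies φ(G_k) ≤ (1 + ε) · C(2n+k, n)/3. -/
lemma key_bound {N n m : ℕ} (hn : 2 ≤ n)
    (f : {A : Finset (Fin N) // A.card = n} → Fin m)
    (hsurj : Function.Surjective f) (hb : IsBColoring (kneserGraph N n) f) :
    3 * m ≤ 3 * N + N.choose n := by
  classical
  rcases Nat.eq_zero_or_pos m with hm | hm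
  · simp [hm]
  -- V nonempty
  obtain ⟨v0, _⟩ := hsurj ⟨0, hm⟩
  have hNpos : 0 < N := by
    have h1 : 0 < (v0.1).card := by rw [v0.2]; omega
    obtain ⟨x, _⟩ := Finset.card_pos.mp h1
    exact x.2.trans_le' (Nat.zero_le _)
  have : Nonempty (Fin N) := ⟨⟨0, hNpos⟩⟩
  -- star predicate
  set P : Fin m → Prop := fun c => ∃ x : Fin N, ∀ v : {A : Finset (Fin N) // A.card = n}, f v = c → x ∈ v.1 with hP
  set S : Finset (Fin m) := Finset.univ.filter P with hS
  set T : Finset (Fin m) := Finset.univ.filter (fun c => ¬ P c) with hT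
  -- Step A : S.card ≤ N
  have hScard : S.card ≤ N := by
    have := Finset.card_le_card_of_injOn
      (f := fun c => if h : P c then h.choose else Classical.arbitrary (Fin N))
      (s := S) (t := Finset.univ) (fun _ _ => Finset.mem_univ _) ?_
    · simpa using this
    intro c1 hc1 c2 hc2 heq
    by_contra hne
    simp only [hS, Finset.coe_filter, Set.mem_setOf_eq] at hc1 hc2
    dsimp only at heq
    rw [dif_pos hc1.2, dif_pos hc2.2] at heq
    set x := hc1.2.choose with hx
    have hx1 := hc1.2.choose_spec
    have hx2 := hc2.2.choose_spec
    obtain ⟨v, hv, hdom⟩ := hb.2 c1 (hsurj c1)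
    have hxv : x ∈ v.1 := hx1 v hv
    rcases hdom c2 (hsurj c2) with h | ⟨w, hadj, hw⟩
    · exact hne (hv ▸ h)
    · have hxw : x ∈ w.1 := heq ▸ hx2 w hw
      exact (Finset.disjoint_left.mp hadj.2) hxv hxw
  -- Step B : each non-star class has ≥ 3 elements
  have hTcard : ∀ c ∈ T, 3 ≤ (Finset.univ.filter (fun v : {A : Finset (Fin N) // A.card = n} => f v = c)).card := by
    intro c hc
    rw [hT, Finset.mem_filter] at hc
    by_contra hlt
    push_neg at hlt
    apply hc.2
    set F := Finset.univ.filter (fun v : {A : Finset (Fin N) // A.card = n} => f v = c) with hF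
    have hmemF : ∀ v : {A : Finset (Fin N) // A.card = n}, v ∈ F ↔ f v = c := by
      intro v; simp [hF]
    have hne : F.Nonempty := by
      obtain ⟨v, hv⟩ := hsurj c
      exact ⟨v, (hmemF v).mpr hv⟩
    interval_cases h : F.card
    · exact absurd (Finset.card_pos.mpr hne) (by omega)
    · obtain ⟨v, hv⟩ := Finset.card_eq_one.mp h
      have : 0 < (v.1).card := by rw [v.2]; omega
      obtain ⟨x, hx⟩ := Finset.card_pos.mp this
      refine ⟨x, fun w hw => ?_⟩
      have : w ∈ F := (hmemF w).mpr hw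
      rw [hv, Finset.mem_singleton] at this
      exact this ▸ hx
    · obtain ⟨v, w, hvw, hvwF⟩ := Finset.card_eq_two.mp h
      have hvF : v ∈ F := by rw [hvwF]; simp
      have hwF : w ∈ F := by rw [hvwF]; simp
      have hfv := (hmemF v).mp hvF
      have hfw := (hmemF w).mp hwF
      have hnadj : ¬ (kneserGraph N n).Adj v w := fun hadj =>
        hb.1 v w hadj (hfv.trans hfw.symm)
      have hndisj : ¬ Disjoint (v.1) (w.1) := fun hd => hnadj ⟨hvw, hd⟩
      obtain ⟨x, hxv, hxw⟩ := Finset.not_disjoint_iff.mp hndisj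
      refine ⟨x, fun u hu => ?_⟩
      have : u ∈ F := (hmemF u).mpr hu
      rw [hvwF, Finset.mem_insert, Finset.mem_singleton] at this
      rcases this with rfl | rfl
      · exact hxv
      · exact hxw
  -- Step C : 3 * T.card ≤ choose N n
  have hsum : ∑ c ∈ Finset.univ, (Finset.univ.filter (fun v : {A : Finset (Fin N) // A.card = n} => f v = c)).card
      = N.choose n := by
    rw [← Finset.card_eq_sum_card_fiberwise (fun (v : {A : Finset (Fin N) // A.card = n}) _ => Finset.mem_univ (f v)),
      Finset.card_univ, Fintype.card_finset_len, Fintype.card_fin]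
  have hT3 : 3 * T.card ≤ N.choose n := by
    calc 3 * T.card = ∑ _c ∈ T, 3 := by rw [Finset.sum_const, smul_eq_mul, mul_comm]
    _ ≤ ∑ c ∈ T, (Finset.univ.filter (fun v : {A : Finset (Fin N) // A.card = n} => f v = c)).card :=
        Finset.sum_le_sum hTcard
    _ ≤ ∑ c ∈ Finset.univ, (Finset.univ.filter (fun v : {A : Finset (Fin N) // A.card = n} => f v = c)).card :=
        Finset.sum_le_sum_of_subset (Finset.subset_univ T)
    _ = N.choose n := hsum
  have hST : S.card + T.card = m := by
    rw [hS, hT, Finset.card_filter_add_card_filter_not, Finset.card_univ,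
      Fintype.card_fin]
  omega

lemma choose_mono_left {N : ℕ} : ∀ b, b ≤ N / 2 → ∀ a, a ≤ b → N.choose a ≤ N.choose b := by
  intro b
  induction b with
  | zero => intro _ a ha; simp [Nat.le_zero.mp ha]
  | succ b ih =>
    intro hb a ha
    rcases Nat.lt_or_ge a (b + 1) with h | h
    · exact (ih (by omega) a (by omega)).trans
        (Nat.choose_le_succ_of_lt_half_left (by omega))
    · have : a = b + 1 := by omega
      subst this; exact le_rfl

/-- For fixed `n ≥ 2`, the b-chromatic number of `G_k = KG(2n+k, n)` satisfies
`φ(G_k) ≤ (1 + o(1)) ⬝ |V(G_k)| / 3` as `k → ∞`: for every `ε > 0` there is `K`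
such that for all `k ≥ K`, `φ(G_k) ≤ (1 + ε) ⬝ C(2n+k, n) / 3`. -/
theorem bChromaticNumber_kneser_asymptotic {n : ℕ} (hn : 2 ≤ n) :
    ∀ ε : ℝ, 0 < ε → ∃ K : ℕ, ∀ k : ℕ, K ≤ k →
      (bChromaticNumber (kneserGraph (2 * n + k) n) : ℝ) ≤
        (1 + ε) * ((2 * n + k).choose n : ℝ) / 3 := by
  intro ε hε
  refine ⟨⌈6 / ε⌉₊, fun k hk => ?_⟩
  set N := 2 * n + k with hN
  -- natural number bound on the b-chromatic number
  have hnat : 3 * bChromaticNumber (kneserGraph N n) ≤ 3 * N + N.choose n := by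
    rw [bChromaticNumber]
    set s := {m : ℕ | ∃ f : {A : Finset (Fin N) // A.card = n} → Fin m,
      Function.Surjective f ∧ IsBColoring (kneserGraph N n) f} with hs
    rcases Set.eq_empty_or_nonempty s with h | h
    · rw [h, csSup_empty]
      simp
    · have hbdd : BddAbove s := by
        refine ⟨N + N.choose n, fun m hm => ?_⟩
        obtain ⟨f, hsurj, hbc⟩ := hm
        have := key_bound hn f hsurj hbc
        omega
      obtain ⟨f, hsurj, hbc⟩ := Nat.sSup_mem h hbdd
      exact key_bound hn f hsurj hbc
  have h1 : (3 : ℝ) * (bChromaticNumber (kneserGraph N n) : ℝ) ≤ 3 * N + N.choose n := by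
    exact_mod_cast hnat
  have h2 : (N.choose 2 : ℝ) ≤ (N.choose n : ℝ) := by
    exact_mod_cast choose_mono_left n (by omega) 2 hn
  have h3 : (N.choose 2 : ℝ) = (N : ℝ) * ((N : ℝ) - 1) / 2 := Nat.cast_choose_two (K := ℝ) N
  have hN1 : (6 : ℝ) / ε ≤ (N : ℝ) - 1 := by
    have hk' : (⌈6 / ε⌉₊ : ℝ) ≤ (k : ℝ) := Nat.cast_le.mpr hk
    have hNk : (k : ℝ) + 1 ≤ (N : ℝ) := by
      have : k + 1 ≤ N := by omega
      exact_mod_cast this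
    have := Nat.le_ceil (6 / ε)
    linarith
  have h6 : (6 : ℝ) ≤ ε * ((N : ℝ) - 1) := by
    rw [div_le_iff₀ hε] at hN1
    linarith [mul_comm ε ((N : ℝ) - 1)]
  have hNpos : (0 : ℝ) ≤ (N : ℝ) := Nat.cast_nonneg N
  have hεC : 3 * (N : ℝ) ≤ ε * (N.choose n : ℝ) := by
    nlinarith [mul_le_mul_of_nonneg_left h2 hε.le,
      mul_le_mul_of_nonneg_left h6 hNpos]
  have hCpos : (0 : ℝ) ≤ (N.choose n : ℝ) := Nat.cast_nonneg _
  linarith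
end
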